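/- arXiv:2107.11759 — 2 statements merged into one kernel-verified Lean document; each statement's English description precedes it below -/
import Mathlib

section
/- Let G be a closed subgroup of the linear isometries of ℝ^N with ℓ(G) finite. Then the set Σ = {x ∈ S^{N-1} : #Gx = ℓ(G)} is a compact G-invariant subset of ℝ^N. -/
open Set Metric

noncomputable section

abbrev Euc (N : ℕ) := EuclideanSpace ℝ (Fin N)

/-- The orbit of a point `x` under a subgroup `G` of linear isometries. -/
def Gorbit {N : ℕ} (G : Subgroup (Euc N ≃ₗᵢ[ℝ] Euc N)) (x : Euc N) : Set (Euc N) :=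
  {y | ∃ g ∈ G, g x = y}

/-- The set `Σ` of unit vectors whose orbit has minimal cardinality `ℓ`. -/
def GSigma {N : ℕ} (G : Subgroup (Euc N ≃ₗᵢ[ℝ] Euc N)) (ℓ : ℕ∞) : Set (Euc N) :=
  {x ∈ sphere (0 : Euc N) 1 | (Gorbit G x).encard = ℓ}

/-!
The orbit cardinality `x ↦ #Gx` is lower semicontinuous: if `g₁ x, …, gₖ x` are distinct, then so
are `g₁ y, …, gₖ y` for all `y` near `x`. Since `ℓ` is the minimal orbit cardinality on nonzero
vectors, `Σ` is the intersection of the sphere with the closed set `{x | #Gx ≤ ℓ}`, hence compact.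
Invariance holds because `G` preserves norms and `G(gx) = Gx`.
-/

open Filter Topology

theorem lowerSemicontinuous_encard_image_apply {F X Y : Type*} [TopologicalSpace X]
    [TopologicalSpace Y] [T2Space Y] [FunLike F X Y] [ContinuousMapClass F X Y] (S : Set F) :
    LowerSemicontinuous fun x => ((fun f : F => f x) '' S).encard := by
  intro x k hk
  obtain ⟨S', hS'S, hbij⟩ := exists_subset_bijOn S (fun f : F => f x)
  have hk1 : k + 1 ≤ S'.encard := by
    rw [← hbij.injOn.encard_image, hbij.image_eq]
    exact Order.add_one_le_of_lt hk
  obtain ⟨s, hsS', hs⟩ := exists_subset_encard_eq hk1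
  have hsfin : s.Finite := finite_of_encard_eq_coe (k := k.toNat + 1) (by
    rw [hs, Nat.cast_add, ENat.natCast_toNat hk.ne_top, Nat.cast_one])
  have hinj : ∀ᶠ y in 𝓝 x, InjOn (fun f : F => f y) s := by
    refine hsfin.eventually_all.2 fun f hf => hsfin.eventually_all.2 fun g hg => ?_
    by_cases hfg : f = g
    · exact Eventually.of_forall fun _ _ => hfg
    have hne : f x ≠ g x := fun h => hfg (hbij.injOn (hsS' hf) (hsS' hg) h)
    filter_upwards [((map_continuous f).continuousAt.ne_iff_eventually_ne
      (map_continuous g).continuousAt).mp hne] with y hy h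
    exact absurd h hy
  filter_upwards [hinj] with y hy
  calc k < k + 1 := (ENat.lt_add_one_iff hk.ne_top).2 le_rfl
    _ = ((fun f : F => f y) '' s).encard := by rw [hy.encard_image, hs]
    _ ≤ _ := encard_le_encard (image_mono (hsS'.trans hS'S))

section

variable {N : ℕ} (G : Subgroup (Euc N ≃ₗᵢ[ℝ] Euc N))

theorem Gorbit_apply {g : Euc N ≃ₗᵢ[ℝ] Euc N} (hg : g ∈ G) (x : Euc N) :
    Gorbit G (g x) = Gorbit G x := by
  ext y
  constructor
  · rintro ⟨h, hh, rfl⟩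
    exact ⟨h * g, mul_mem hh hg, rfl⟩
  · rintro ⟨h, hh, rfl⟩
    exact ⟨h * g⁻¹, mul_mem hh (inv_mem hg), by simp⟩

theorem GSigma_eq_sphere_inter {ℓ : ℕ∞}
    (hℓ : IsLeast {n : ℕ∞ | ∃ x : Euc N, x ≠ 0 ∧ (Gorbit G x).encard = n} ℓ) :
    GSigma G ℓ = sphere 0 1 ∩ {x | (Gorbit G x).encard ≤ ℓ} := by
  ext x
  refine and_congr_right fun hx => ⟨le_of_eq, fun hle => le_antisymm hle ?_⟩
  exact hℓ.2 ⟨x, ne_zero_of_mem_unit_sphere ⟨x, hx⟩, rfl⟩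

theorem isCompact_GSigma {ℓ : ℕ∞}
    (hℓ : IsLeast {n : ℕ∞ | ∃ x : Euc N, x ≠ 0 ∧ (Gorbit G x).encard = n} ℓ) :
    IsCompact (GSigma G ℓ) := by
  rw [GSigma_eq_sphere_inter G hℓ]
  exact (isCompact_sphere 0 1).inter_right
    ((lowerSemicontinuous_encard_image_apply (G : Set (Euc N ≃ₗᵢ[ℝ] Euc N))).isClosed_preimage ℓ)

theorem image_GSigma {g : Euc N ≃ₗᵢ[ℝ] Euc N} (hg : g ∈ G) (ℓ : ℕ∞) :
    (fun x => g x) '' GSigma G ℓ = GSigma G ℓ := by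
  ext x
  rw [show (fun x => g x) = g from rfl, g.image_eq_preimage_symm]
  simp only [GSigma, mem_preimage, mem_ofPred_eq, mem_sphere_zero_iff_norm,
    LinearIsometryEquiv.norm_map, Gorbit_apply G (g := g.symm) (inv_mem hg)]

end

theorem sigma_compact_invariant_general {N : ℕ}
    (G : Subgroup (Euc N ≃ₗᵢ[ℝ] Euc N))
    (ℓ : ℕ∞)
    (hℓ : IsLeast {n : ℕ∞ | ∃ x : Euc N, x ≠ 0 ∧ (Gorbit G x).encard = n} ℓ) :
    IsCompact (GSigma G ℓ) ∧
      ∀ g : Euc N ≃ₗᵢ[ℝ] Euc N, g ∈ G → (fun x => g x) '' GSigma G ℓ = GSigma G ℓ :=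
  ⟨isCompact_GSigma G hℓ, fun _ hg => image_GSigma G hg ℓ⟩

theorem sigma_compact_invariant {N : ℕ} (hN : 1 ≤ N)
    (G : Subgroup (Euc N ≃ₗᵢ[ℝ] Euc N))
    (hG : IsClosed ((fun g : Euc N ≃ₗᵢ[ℝ] Euc N =>
      g.toLinearIsometry.toContinuousLinearMap) '' (G : Set (Euc N ≃ₗᵢ[ℝ] Euc N))))
    (ℓ : ℕ∞)
    (hℓ : IsLeast {n : ℕ∞ | ∃ x : Euc N, x ≠ 0 ∧ (Gorbit G x).encard = n} ℓ)
    (hfin : ℓ ≠ ⊤) :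
    IsCompact (GSigma G ℓ) ∧
      ∀ g : Euc N ≃ₗᵢ[ℝ] Euc N, g ∈ G → (fun x => g x) '' GSigma G ℓ = GSigma G ℓ :=
  sigma_compact_invariant_general G ℓ hℓ
end
end

section
/- Let N ≥ 1 and λ = 1 − 1/√2. For x = (r, y) ∈ ℝ × ℝ^{N−1} and ξ = (ξ_0, 0, …, 0) with 0 < r < ξ_0/2 and |y| > r, one has |x| + |ξ − x| > ξ_0 + λ|y|. -/
/-! Since `|ξ - x| ≥ ξ₀ - r`, it suffices that `|x| > r + λ|y|`. By the quadratic–arithmetic mean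
inequality `|x| ≥ (r + |y|)/√2`, and `(r + |y|)/√2 - (r + λ|y|) = (√2 - 1)(|y| - r/√2)`, which is
positive as soon as `|y| > r`. -/

open Real

lemma add_div_sqrt_two_le_sqrt_sq_add_sq (a b : ℝ) : (a + b) / √2 ≤ √(a ^ 2 + b ^ 2) := by
  rw [div_le_iff₀ (by positivity), ← sqrt_mul (by positivity)]
  exact le_sqrt_of_sq_le (by nlinarith [sq_nonneg (a - b)])

lemma add_one_sub_one_div_sqrt_two_mul_lt_sqrt_sq_add_sq {r s : ℝ} (hs : 0 ≤ s) (hrs : r < s) :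
    r + (1 - 1 / √2) * s < √(r ^ 2 + s ^ 2) := by
  have hsq : √2 ^ 2 = 2 := sq_sqrt zero_le_two
  have hone : 1 < √2 := by nlinarith [sqrt_nonneg 2]
  have hgap : (r + s) / √2 - (r + (1 - 1 / √2) * s) = (√2 - 1) * (s - r / √2) := by
    field_simp
    linear_combination (-s) * hsq
  have hr_div : r / √2 < s := by
    rw [div_lt_iff₀ (by positivity)]
    nlinarith
  calc r + (1 - 1 / √2) * s < (r + s) / √2 := by
        linarith [mul_pos (sub_pos.2 hone) (sub_pos.2 hr_div)]
    _ ≤ √(r ^ 2 + s ^ 2) := add_div_sqrt_two_le_sqrt_sq_add_sq r s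

theorem geometric_splitting_inequality_general {N : ℕ}
    (r ξ₀ : ℝ) (y : EuclideanSpace ℝ (Fin (N - 1)))
    (hy : r < ‖y‖) :
    Real.sqrt (r ^ 2 + ‖y‖ ^ 2) + Real.sqrt ((ξ₀ - r) ^ 2 + ‖y‖ ^ 2) >
      ξ₀ + (1 - 1 / Real.sqrt 2) * ‖y‖ := by
  have hx := add_one_sub_one_div_sqrt_two_mul_lt_sqrt_sq_add_sq (norm_nonneg y) hy
  have hξx : ξ₀ - r ≤ √((ξ₀ - r) ^ 2 + ‖y‖ ^ 2) :=
    le_sqrt_of_sq_le (le_add_of_nonneg_right (sq_nonneg _))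
  linarith

theorem geometric_splitting_inequality {N : ℕ} (hN : 1 ≤ N)
    (r ξ₀ : ℝ) (y : EuclideanSpace ℝ (Fin (N - 1)))
    (hr : 0 < r) (hrξ : r < ξ₀ / 2) (hy : r < ‖y‖) :
    Real.sqrt (r ^ 2 + ‖y‖ ^ 2) + Real.sqrt ((ξ₀ - r) ^ 2 + ‖y‖ ^ 2) >
      ξ₀ + (1 - 1 / Real.sqrt 2) * ‖y‖ :=
  geometric_splitting_inequality_general r ξ₀ y hy
end
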